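/- Let M ≥ 2 and S ≥ 1 be integers, n = M^S, and let A = (a_1, …, a_n) be a sequence of nonnegative real numbers with ∑_{x=1}^{n} a_x > 0. Then treemd_{M,S}(A) ≤ (∑_{x=1}^{n} a_x) · sqrt( 2·S·ln( n·(max_x a_x) / (∑_{x=1}^{n} a_x) ) ). -/

import Mathlib

/-- Sum of the sequence `A` over the interval of indices `(l, r] = {l+1, …, r}`. -/
noncomputable def iSum (A : ℕ → ℝ) (l r : ℕ) : ℝ := ∑ x ∈ Finset.Ioc l r, A x

/-- Total deviation `md_M` of the scale-`s` interval `(l, l + M^s]` of the sequence `A`. -/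
noncomputable def mdAt (M s l : ℕ) (A : ℕ → ℝ) : ℝ :=
  ∑ i ∈ Finset.range M,
    |iSum A (l + i * M ^ (s - 1)) (l + (i + 1) * M ^ (s - 1)) -
      (1 / (M : ℝ)) * iSum A l (l + M ^ s)|

/-- Tree total deviation `treemd_{M,S}` of the sequence `A` (indexed by `{1, …, M^S}`). -/
noncomputable def treemd (M S : ℕ) (A : ℕ → ℝ) : ℝ :=
  ∑ s ∈ Finset.Icc 1 S, ∑ k ∈ Finset.range (M ^ (S - s)), mdAt M s (k * M ^ s) A

/-!
At every node of the tree, `md` is the `ℓ¹` distance between the masses of the `M` children and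
their uniform split, so Pinsker's inequality bounds `md²` by twice the node's mass `W` times the
Kullback–Leibler divergence `D` of the split from the uniform one. By the chain rule for entropy,
the divergences of one scale add up to `H_{s+1} - H_s + T log M`, where `H_s` is the entropy of
the masses at scale `s` and `T` the total mass; over the `S` scales this telescopes to
`H_S - H_0 + S T log M ≤ T log (n · max a / T)`. Cauchy–Schwarz, first inside each scale with the
weights `W` and then across the scales, turns `md² ≤ 2 W D` into the bound.
-/

open Finset Real InformationTheory

lemma monotoneOn_add_one_mul_log_sub :
    MonotoneOn (fun x : ℝ ↦ (x + 1) * log x - 2 * (x - 1)) (Set.Ioi 0) := by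
  have hderiv : ∀ x : ℝ, 0 < x →
      HasDerivAt (fun x : ℝ ↦ (x + 1) * log x - 2 * (x - 1)) (log x - (1 - x⁻¹)) x :=
    fun x hx ↦ (((hasDerivAt_id x).add_const 1).mul (hasDerivAt_log hx.ne')
      |>.sub (((hasDerivAt_id x).sub_const 1).const_mul 2)).congr_deriv
        (by simp only [id]; field_simp; ring)
  refine monotoneOn_of_hasDerivWithinAt_nonneg (convex_Ioi 0)
    (fun x hx ↦ (hderiv x hx).continuousAt.continuousWithinAt)
    (fun x hx ↦ (hderiv x (by simpa using hx)).hasDerivWithinAt)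
    (fun x hx ↦ sub_nonneg.2 (one_sub_inv_le_log_of_pos (by simpa using hx)))

lemma three_mul_sq_sub_one_le_mul_klFun {x : ℝ} (hx : 0 ≤ x) :
    3 * (x - 1) ^ 2 ≤ (2 * x + 4) * klFun x := by
  set h := fun x : ℝ ↦ (x + 1) * log x - 2 * (x - 1)
  have hh_mono : MonotoneOn h (Set.Ioi 0) := monotoneOn_add_one_mul_log_sub
  have hh_one : h 1 = 0 := by simp [h]
  set g := fun x : ℝ ↦ (2 * x + 4) * klFun x - 3 * (x - 1) ^ 2
  have hg_cont : Continuous g := by have := continuous_klFun; fun_prop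
  -- `g' = 4 h` changes sign at `1`, where `g` vanishes
  have hg_deriv : ∀ y, 0 < y → HasDerivAt g (4 * h y) y := fun y hy ↦ by
    refine ((((hasDerivAt_id y).const_mul 2).add_const 4).mul (hasDerivAt_klFun hy.ne')
      |>.sub ((((hasDerivAt_id y).sub_const 1).pow 2).const_mul 3)).congr_deriv ?_
    simp only [h, klFun, id]
    ring
  suffices g 1 ≤ g x by simpa [g, klFun_one] using this
  rcases le_total x 1 with hx1 | hx1
  · refine antitoneOn_of_hasDerivWithinAt_nonpos (convex_Icc 0 1) hg_cont.continuousOn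
      (fun y hy ↦ (hg_deriv y (by rw [interior_Icc] at hy; exact hy.1)).hasDerivWithinAt)
      (fun y hy ↦ ?_)
      ⟨hx, hx1⟩ ⟨zero_le_one, le_rfl⟩ hx1
    rw [interior_Icc] at hy
    linarith [hh_mono hy.1 (Set.mem_Ioi.2 one_pos) hy.2.le]
  · refine monotoneOn_of_hasDerivWithinAt_nonneg (convex_Ici 1) hg_cont.continuousOn
      (fun y hy ↦ (hg_deriv y (one_pos.trans (by simpa using hy))).hasDerivWithinAt)
      (fun y hy ↦ ?_) (Set.mem_Ici.2 le_rfl) hx1 hx1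
    rw [interior_Ici] at hy
    linarith [hh_mono (Set.mem_Ioi.2 one_pos) (Set.mem_Ioi.2 (one_pos.trans hy)) hy.le]

lemma mul_klFun_div_eq {p q : ℝ} (hpq : q = 0 → p = 0) :
    q * klFun (p / q) = p * log (p / q) + q - p := by
  rcases eq_or_ne q 0 with hq | hq
  · simp [hq, hpq hq]
  · rw [klFun, mul_sub, mul_add, ← mul_assoc, mul_div_cancel₀ _ hq]
    ring

section Divergence

variable {ι : Type*} {s : Finset ι} {p q : ι → ℝ}

lemma sum_mul_log_div_eq_sum_mul_klFun (hpq : ∀ i ∈ s, q i = 0 → p i = 0)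
    (hsum : ∑ i ∈ s, p i = ∑ i ∈ s, q i) :
    ∑ i ∈ s, p i * log (p i / q i) = ∑ i ∈ s, q i * klFun (p i / q i) := by
  rw [sum_congr rfl fun i hi ↦ mul_klFun_div_eq (hpq i hi), sum_sub_distrib, sum_add_distrib,
    hsum, add_sub_cancel_right]

lemma sum_mul_log_div_nonneg (hp : ∀ i ∈ s, 0 ≤ p i) (hq : ∀ i ∈ s, 0 ≤ q i)
    (hpq : ∀ i ∈ s, q i = 0 → p i = 0) (hsum : ∑ i ∈ s, p i = ∑ i ∈ s, q i) :
    0 ≤ ∑ i ∈ s, p i * log (p i / q i) := by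
  rw [sum_mul_log_div_eq_sum_mul_klFun hpq hsum]
  exact sum_nonneg fun i hi ↦ mul_nonneg (hq i hi) (klFun_nonneg (div_nonneg (hp i hi) (hq i hi)))

/-- Pinsker's inequality, by Cauchy–Schwarz with the weights `(2 p + 4 q) / 3`. -/
theorem sq_sum_abs_sub_le_two_mul_sum_mul_log_div (hp : ∀ i ∈ s, 0 ≤ p i)
    (hq : ∀ i ∈ s, 0 ≤ q i) (hpq : ∀ i ∈ s, q i = 0 → p i = 0)
    (hsum : ∑ i ∈ s, p i = ∑ i ∈ s, q i) :
    (∑ i ∈ s, |p i - q i|) ^ 2 ≤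
      2 * (∑ i ∈ s, p i) * ∑ i ∈ s, p i * log (p i / q i) := by
  have hweights : ∑ i ∈ s, (2 * p i + 4 * q i) / 3 = 2 * ∑ i ∈ s, p i := by
    rw [← sum_div, sum_add_distrib, ← mul_sum, ← mul_sum, ← hsum]
    ring
  rw [sum_mul_log_div_eq_sum_mul_klFun hpq hsum, ← hweights]
  refine sum_sq_le_sum_mul_sum_of_sq_le_mul s (fun i hi ↦ by linarith [hp i hi, hq i hi])
    (fun i hi ↦ mul_nonneg (hq i hi) (klFun_nonneg (div_nonneg (hp i hi) (hq i hi))))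
    (fun i hi ↦ ?_)
  rcases (hq i hi).eq_or_lt with hq0 | hq0
  · simp [← hq0, hpq i hi hq0.symm]
  · have key := three_mul_sq_sub_one_le_mul_klFun (div_nonneg (hp i hi) hq0.le)
    calc |p i - q i| ^ 2 = q i ^ 2 * (3 * (p i / q i - 1) ^ 2) / 3 := by
          rw [sq_abs]; field_simp
      _ ≤ q i ^ 2 * ((2 * (p i / q i) + 4) * klFun (p i / q i)) / 3 := by gcongr
      _ = (2 * p i + 4 * q i) / 3 * (q i * klFun (p i / q i)) := by field_simp

lemma sum_const_sum_div_card (s : Finset ι) (p : ι → ℝ) :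
    ∑ _i ∈ s, (∑ j ∈ s, p j) / #s = ∑ j ∈ s, p j := by
  rcases s.eq_empty_or_nonempty with rfl | hs
  · simp
  · rw [sum_const, nsmul_eq_mul, mul_div_cancel₀ _ (by simpa using hs.ne_empty)]

lemma eq_zero_of_sum_div_card_eq_zero (hp : ∀ i ∈ s, 0 ≤ p i) {i : ι} (hi : i ∈ s)
    (h : (∑ j ∈ s, p j) / #s = 0) : p i = 0 := by
  rw [div_eq_zero_iff, Nat.cast_eq_zero, card_eq_zero] at h
  exact h.elim (fun h ↦ (sum_eq_zero_iff_of_nonneg hp).1 h i hi)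
    fun h ↦ absurd hi (h ▸ notMem_empty i)

lemma sum_mul_log_div_sum_div_eq (hp : ∀ i ∈ s, 0 ≤ p i) {a : ℝ} (ha : a ≠ 0) :
    ∑ i ∈ s, p i * log (p i / ((∑ j ∈ s, p j) / a)) =
      negMulLog (∑ i ∈ s, p i) - ∑ i ∈ s, negMulLog (p i) + (∑ i ∈ s, p i) * log a := by
  set w := ∑ j ∈ s, p j with hw
  rcases eq_or_ne w 0 with hw0 | hw0
  · have hp0 := (sum_eq_zero_iff_of_nonneg hp).1 hw0
    simp +contextual [hw0, hp0]
  have hterm : ∀ i ∈ s,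
      p i * log (p i / (w / a)) = -negMulLog (p i) - p i * log w + p i * log a := by
    intro i _
    rcases eq_or_ne (p i) 0 with hpi | hpi
    · simp [hpi]
    · rw [log_div hpi (div_ne_zero hw0 ha), log_div hw0 ha, negMulLog]
      ring
  rw [sum_congr rfl hterm, sum_add_distrib, sum_sub_distrib, sum_neg_distrib, ← sum_mul,
    ← sum_mul, ← hw, negMulLog]
  ring

end Divergence

lemma sum_range_iSum (A : ℕ → ℝ) (l m K : ℕ) :
    ∑ i ∈ range K, iSum A (l + i * m) (l + (i + 1) * m) = iSum A l (l + K * m) := by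
  induction K with
  | zero => simp [iSum]
  | succ K ih =>
    rw [sum_range_succ, ih, iSum, iSum, iSum, sum_Ioc_consecutive _ (by omega) (by nlinarith)]

lemma iSum_zero_eq_sum_Icc (A : ℕ → ℝ) (n : ℕ) : iSum A 0 n = ∑ x ∈ Icc 1 n, A x := by
  rw [iSum, ← Icc_add_one_left_eq_Ioc, zero_add]

lemma sum_range_sum_range_mul_add (f : ℕ → ℝ) (K M : ℕ) :
    ∑ k ∈ range K, ∑ i ∈ range M, f (k * M + i) = ∑ j ∈ range (K * M), f j := by
  induction K with
  | zero => simp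
  | succ K ih => rw [sum_range_succ, ih, add_mul, one_mul, sum_range_add]

lemma pow_sub_eq_pow_sub_succ_mul (M : ℕ) {s S : ℕ} (hs : s < S) :
    M ^ (S - s) = M ^ (S - (s + 1)) * M := by
  rw [← pow_succ]
  congr 1
  omega

namespace Treemd

variable (M : ℕ) (A : ℕ → ℝ)

noncomputable def blockSum (s k : ℕ) : ℝ := iSum A (k * M ^ s) ((k + 1) * M ^ s)

noncomputable def blockKL (s k : ℕ) : ℝ :=
  ∑ i ∈ range M, blockSum M A s (k * M + i) *
    log (blockSum M A s (k * M + i) / (blockSum M A (s + 1) k / M))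

lemma blockSum_zero (k : ℕ) : blockSum M A 0 k = A (k + 1) := by
  simp [blockSum, iSum]

lemma blockSum_succ (s k : ℕ) :
    blockSum M A (s + 1) k = ∑ i ∈ range M, blockSum M A s (k * M + i) := by
  have hchild : ∀ i, blockSum M A s (k * M + i) =
      iSum A (k * M ^ (s + 1) + i * M ^ s) (k * M ^ (s + 1) + (i + 1) * M ^ s) := fun i ↦ by
    rw [blockSum, pow_succ]; congr 1 <;> ring
  rw [sum_congr rfl fun i _ ↦ hchild i, sum_range_iSum, blockSum, pow_succ]
  congr 1
  ring

lemma blockSum_succ_div_eq (s k : ℕ) :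
    blockSum M A (s + 1) k / M = (∑ i ∈ range M, blockSum M A s (k * M + i)) / #(range M) := by
  rw [blockSum_succ, card_range]

lemma sum_range_blockSum (s K : ℕ) :
    ∑ k ∈ range K, blockSum M A s k = iSum A 0 (K * M ^ s) := by
  simpa [blockSum] using sum_range_iSum A 0 (M ^ s) K

lemma mdAt_succ (s k : ℕ) :
    mdAt M (s + 1) (k * M ^ (s + 1)) A =
      ∑ i ∈ range M, |blockSum M A s (k * M + i) - blockSum M A (s + 1) k / M| := by
  refine sum_congr rfl fun i _ ↦ ?_
  rw [Nat.add_sub_cancel, one_div_mul_eq_div, blockSum, blockSum, pow_succ]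
  congr 4 <;> ring

variable {M A} {S : ℕ}

lemma sum_range_blockSum_level {s : ℕ} (hs : s ≤ S) :
    ∑ k ∈ range (M ^ (S - s)), blockSum M A s k = ∑ x ∈ Icc 1 (M ^ S), A x := by
  rw [sum_range_blockSum, ← pow_add, Nat.sub_add_cancel hs, iSum_zero_eq_sum_Icc]

lemma blockSum_nonneg (hA : ∀ x ∈ Icc 1 (M ^ S), 0 ≤ A x) {s k : ℕ} (hs : s ≤ S)
    (hk : k < M ^ (S - s)) : 0 ≤ blockSum M A s k := by
  have hle : (k + 1) * M ^ s ≤ M ^ S := by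
    calc (k + 1) * M ^ s ≤ M ^ (S - s) * M ^ s := Nat.mul_le_mul_right _ hk
      _ = M ^ S := by rw [← pow_add, Nat.sub_add_cancel hs]
  unfold blockSum iSum
  refine sum_nonneg fun x hx ↦ hA x ?_
  simp only [mem_Ioc, mem_Icc] at hx ⊢
  omega

lemma blockSum_child_nonneg (hA : ∀ x ∈ Icc 1 (M ^ S), 0 ≤ A x) {s k : ℕ} (hs : s < S)
    (hk : k < M ^ (S - (s + 1))) : ∀ i ∈ range M, 0 ≤ blockSum M A s (k * M + i) := by
  intro i hi
  refine blockSum_nonneg hA hs.le ?_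
  rw [pow_sub_eq_pow_sub_succ_mul M hs]
  have := mem_range.1 hi
  nlinarith

lemma blockKL_nonneg {s k : ℕ} (hc : ∀ i ∈ range M, 0 ≤ blockSum M A s (k * M + i)) :
    0 ≤ blockKL M A s k := by
  rw [blockKL, blockSum_succ_div_eq]
  exact sum_mul_log_div_nonneg hc (fun _ _ ↦ div_nonneg (sum_nonneg hc) (Nat.cast_nonneg _))
    (fun _ hi ↦ eq_zero_of_sum_div_card_eq_zero hc hi) (sum_const_sum_div_card _ _).symm

lemma sq_mdAt_le {s k : ℕ} (hc : ∀ i ∈ range M, 0 ≤ blockSum M A s (k * M + i)) :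
    mdAt M (s + 1) (k * M ^ (s + 1)) A ^ 2 ≤ blockSum M A (s + 1) k * (2 * blockKL M A s k) := by
  rw [mdAt_succ, blockKL, blockSum_succ_div_eq, ← mul_assoc, mul_comm _ (2 : ℝ), blockSum_succ]
  exact sq_sum_abs_sub_le_two_mul_sum_mul_log_div hc
    (fun _ _ ↦ div_nonneg (sum_nonneg hc) (Nat.cast_nonneg _))
    (fun _ hi ↦ eq_zero_of_sum_div_card_eq_zero hc hi) (sum_const_sum_div_card _ _).symm

variable (M A)

noncomputable def levelEntropy (S s : ℕ) : ℝ :=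
  ∑ k ∈ range (M ^ (S - s)), negMulLog (blockSum M A s k)

noncomputable def levelKL (S s : ℕ) : ℝ :=
  ∑ k ∈ range (M ^ (S - (s + 1))), blockKL M A s k

variable {M A}

lemma levelKL_nonneg (hA : ∀ x ∈ Icc 1 (M ^ S), 0 ≤ A x) {s : ℕ} (hs : s < S) :
    0 ≤ levelKL M A S s :=
  sum_nonneg fun _ hk ↦ blockKL_nonneg (blockSum_child_nonneg hA hs (mem_range.1 hk))

lemma levelKL_eq_levelEntropy_sub_add (hM : M ≠ 0) (hA : ∀ x ∈ Icc 1 (M ^ S), 0 ≤ A x)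
    {s : ℕ} (hs : s < S) :
    levelKL M A S s = levelEntropy M A S (s + 1) - levelEntropy M A S s +
      (∑ x ∈ Icc 1 (M ^ S), A x) * log M := by
  have hnode : ∀ k ∈ range (M ^ (S - (s + 1))), blockKL M A s k =
      negMulLog (blockSum M A (s + 1) k) -
        ∑ i ∈ range M, negMulLog (blockSum M A s (k * M + i)) +
          blockSum M A (s + 1) k * log M := fun k hk ↦ by
    rw [blockKL, blockSum_succ, sum_mul_log_div_sum_div_eq
      (blockSum_child_nonneg hA hs (mem_range.1 hk)) (Nat.cast_ne_zero.2 hM)]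
  rw [levelKL, sum_congr rfl hnode, sum_add_distrib, sum_sub_distrib, sum_range_sum_range_mul_add
    (fun j ↦ negMulLog (blockSum M A s j)), ← pow_sub_eq_pow_sub_succ_mul M hs, ← sum_mul,
    sum_range_blockSum_level hs, levelEntropy, levelEntropy]

lemma sum_levelKL_eq_levelEntropy_sub_add (hM : M ≠ 0) (hA : ∀ x ∈ Icc 1 (M ^ S), 0 ≤ A x) :
    ∑ s ∈ range S, levelKL M A S s = levelEntropy M A S S - levelEntropy M A S 0 +
      S * ((∑ x ∈ Icc 1 (M ^ S), A x) * log M) := by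
  rw [sum_congr rfl fun s hs ↦ levelKL_eq_levelEntropy_sub_add hM hA (mem_range.1 hs),
    sum_add_distrib, sum_range_sub (levelEntropy M A S), sum_const, card_range, nsmul_eq_mul]

lemma levelEntropy_self : levelEntropy M A S S = negMulLog (∑ x ∈ Icc 1 (M ^ S), A x) := by
  simp [levelEntropy, blockSum, iSum_zero_eq_sum_Icc]

lemma neg_mul_log_le_levelEntropy_zero (hA : ∀ x ∈ Icc 1 (M ^ S), 0 ≤ A x) {m : ℝ}
    (hAm : ∀ x ∈ Icc 1 (M ^ S), A x ≤ m) :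
    -((∑ x ∈ Icc 1 (M ^ S), A x) * log m) ≤ levelEntropy M A S 0 := by
  rw [← sum_range_blockSum_level (Nat.zero_le S), sum_mul, ← sum_neg_distrib, levelEntropy]
  refine sum_le_sum fun k hk ↦ ?_
  have hk : k + 1 ∈ Icc 1 (M ^ S) := by
    rw [mem_range, Nat.sub_zero] at hk
    rw [mem_Icc]
    omega
  rw [blockSum_zero, negMulLog, neg_mul, neg_le_neg_iff]
  rcases (hA _ hk).eq_or_lt with h0 | hpos
  · simp [← h0]
  · exact mul_le_mul_of_nonneg_left (log_le_log hpos (hAm _ hk)) hpos.le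

lemma sum_levelKL_le (hM : M ≠ 0) (hA : ∀ x ∈ Icc 1 (M ^ S), 0 ≤ A x) {m : ℝ}
    (hAm : ∀ x ∈ Icc 1 (M ^ S), A x ≤ m) (hpos : 0 < ∑ x ∈ Icc 1 (M ^ S), A x) :
    ∑ s ∈ range S, levelKL M A S s ≤
      (∑ x ∈ Icc 1 (M ^ S), A x) * log (M ^ S * m / ∑ x ∈ Icc 1 (M ^ S), A x) := by
  have hm : m ≠ 0 := by
    rintro rfl
    exact hpos.not_ge (sum_nonpos hAm)
  rw [sum_levelKL_eq_levelEntropy_sub_add hM hA, levelEntropy_self,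
    log_div (by positivity) hpos.ne', log_mul (by positivity) hm, log_pow, negMulLog]
  linarith [neg_mul_log_le_levelEntropy_zero hA hAm]

lemma sq_sum_mdAt_le (hA : ∀ x ∈ Icc 1 (M ^ S), 0 ≤ A x) {s : ℕ} (hs : s < S) :
    (∑ k ∈ range (M ^ (S - (s + 1))), mdAt M (s + 1) (k * M ^ (s + 1)) A) ^ 2 ≤
      (∑ x ∈ Icc 1 (M ^ S), A x) * (2 * levelKL M A S s) := by
  rw [levelKL, mul_sum, ← sum_range_blockSum_level (Nat.succ_le_of_lt hs)]
  exact sum_sq_le_sum_mul_sum_of_sq_le_mul _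
    (fun k hk ↦ blockSum_nonneg hA (Nat.succ_le_of_lt hs) (mem_range.1 hk))
    (fun k hk ↦ mul_nonneg zero_le_two
      (blockKL_nonneg (blockSum_child_nonneg hA hs (mem_range.1 hk))))
    (fun k hk ↦ sq_mdAt_le (blockSum_child_nonneg hA hs (mem_range.1 hk)))

end Treemd

lemma treemd_eq_sum_range (M S : ℕ) (A : ℕ → ℝ) :
    treemd M S A = ∑ s ∈ range S,
      ∑ k ∈ range (M ^ (S - (s + 1))), mdAt M (s + 1) (k * M ^ (s + 1)) A := by
  rw [treemd, range_eq_Ico,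
    sum_Ico_add' (fun s ↦ ∑ k ∈ range (M ^ (S - s)), mdAt M s (k * M ^ s) A), zero_add,
    Ico_add_one_right_eq_Icc]

open Treemd

/-- For `M ≥ 2`, `S ≥ 1`, `n = M^S`, and a nonnegative sequence `A` with
positive sum, `treemd_{M,S}(A) ≤ (∑ a_x) · sqrt(2·S·ln(n·(max_x a_x)/(∑ a_x)))`. -/
theorem stmt3 (M S : ℕ) (hM : 2 ≤ M) (A : ℕ → ℝ)
    (hnn : ∀ x ∈ Finset.Icc 1 (M ^ S), 0 ≤ A x)
    (hpos : 0 < ∑ x ∈ Finset.Icc 1 (M ^ S), A x) :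
    treemd M S A ≤
      (∑ x ∈ Finset.Icc 1 (M ^ S), A x) *
        Real.sqrt (2 * S *
          Real.log ((M ^ S : ℝ) *
            ((Finset.Icc 1 (M ^ S)).sup'
                (Finset.nonempty_Icc.mpr (Nat.one_le_pow S M (by omega))) A) /
            (∑ x ∈ Finset.Icc 1 (M ^ S), A x))) := by
  set T := ∑ x ∈ Icc 1 (M ^ S), A x
  set m := (Icc 1 (M ^ S)).sup' (nonempty_Icc.mpr (Nat.one_le_pow S M (by omega))) A
  set L := log ((M ^ S : ℝ) * m / T)
  have hKL : ∑ s ∈ range S, levelKL M A S s ≤ T * L :=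
    sum_levelKL_le (by omega) hnn (fun x hx ↦ le_sup' A hx) hpos
  have hsq : treemd M S A ^ 2 ≤ (S * T) * (2 * (T * L)) := by
    rw [treemd_eq_sum_range]
    calc _ ≤ (∑ _s ∈ range S, T) * ∑ s ∈ range S, 2 * levelKL M A S s :=
          sum_sq_le_sum_mul_sum_of_sq_le_mul _ (fun _ _ ↦ hpos.le)
            (fun s hs ↦ mul_nonneg zero_le_two (levelKL_nonneg hnn (mem_range.1 hs)))
            (fun s hs ↦ sq_sum_mdAt_le hnn (mem_range.1 hs))
      _ ≤ (S * T) * (2 * (T * L)) := by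
          rw [sum_const, card_range, nsmul_eq_mul, ← mul_sum]
          gcongr
  calc treemd M S A ≤ √((S * T) * (2 * (T * L))) := le_sqrt_of_sq_le hsq
    _ = T * √(2 * S * L) := by
      rw [show S * T * (2 * (T * L)) = T ^ 2 * (2 * S * L) by ring, sqrt_mul (sq_nonneg T),
        sqrt_sq hpos.le]
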